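/- Let G be an n-vertex d-regular graph containing no K_{B,B} subgraph (B ≥ 1 fixed), let M be a matching in G, and let G_M be the graph on the edges of M where two matching edges are adjacent if some edge of G joins their endpoints. Then for every vertex v of G_M, the induced subgraph of G_M on the neighborhood of v has at most C·d^{2−1/B} edges, for a constant C depending only on B. -/

import Mathlib

open Finset

attribute [local instance] Classical.propDecidable

/-- Two matching edges are adjacent in the contracted graph iff some edge of `G` joins
an endpoint of one to an endpoint of the other. -/
def contractedAdj {V : Type} (G : SimpleGraph V) (e f : Sym2 V) : Prop :=
  e ≠ f ∧ ∃ x ∈ e, ∃ y ∈ f, G.Adj x y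

/-!
The neighbours of `v` in `G_M` are matched to distinct neighbours of its two endpoints, so there
are at most `2d` of them and their endpoints form a vertex set `S` with `|S| ≤ 4d`. Since `M` is a
matching, choosing for each edge of `G_M` between two such neighbours an edge of `G` joining them
is injective, so it suffices to bound the edges of `G` inside `S`. This is the
Kővári–Sós–Turán count: a `B`-subset of `S` has fewer than `B` common neighbours, so
`∑ₓ C(deg x, B) ≤ (B - 1) C(|S|, B)`, and the power-mean inequality turns this into
`(∑ₓ deg x)^B ≤ B^(B+1) |S|^(2B-1)`; with `|S| ≤ 4d` this gives the constant `C = 16B²`.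
-/

theorem Nat.pow_le_pow_mul_descFactorial_add_one (n k : ℕ) :
    n ^ k ≤ k ^ k * (n.descFactorial k + 1) := by
  rcases Nat.lt_or_ge n k with hnk | hkn
  · calc n ^ k ≤ k ^ k := Nat.pow_le_pow_left hnk.le k
      _ ≤ k ^ k * (n.descFactorial k + 1) := Nat.le_mul_of_pos_right _ (Nat.succ_pos _)
  rcases k.eq_zero_or_pos with rfl | hk
  · simp
  have hn : n ≤ k * (n + 1 - k) := by
    obtain ⟨m, rfl⟩ := Nat.exists_eq_add_of_le hkn
    rw [show k + m + 1 - k = m + 1 by omega]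
    nlinarith
  calc n ^ k ≤ (k * (n + 1 - k)) ^ k := Nat.pow_le_pow_left hn k
    _ = k ^ k * (n + 1 - k) ^ k := Nat.mul_pow ..
    _ ≤ k ^ k * n.descFactorial k := Nat.mul_le_mul_left _ (Nat.pow_sub_le_descFactorial n k)
    _ ≤ k ^ k * (n.descFactorial k + 1) := Nat.mul_le_mul_left _ (Nat.le_succ _)

theorem Real.le_mul_rpow_two_sub_inv_of_pow_le {x c t : ℝ} {B : ℕ} (hx : 0 ≤ x) (hc : 0 ≤ c)
    (ht : 0 ≤ t) (hB : 1 ≤ B) (h : x ^ B ≤ c ^ B * t ^ (2 * B - 1)) :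
    x ≤ c * t ^ (2 - 1 / (B : ℝ)) := by
  have hexp : (2 - 1 / (B : ℝ)) * B = ((2 * B - 1 : ℕ) : ℝ) := by
    have : (B : ℝ) ≠ 0 := by positivity
    push_cast [Nat.cast_sub (by omega : 1 ≤ 2 * B)]
    field_simp
  refine (pow_le_pow_iff_left₀ hx (by positivity) (by omega : B ≠ 0)).1 ?_
  rwa [mul_pow, ← Real.rpow_natCast (t ^ _), ← Real.rpow_mul ht, hexp, Real.rpow_natCast]

namespace SimpleGraph

variable {V : Type*} (G : SimpleGraph V)

def BicliqueFree (B : ℕ) : Prop :=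
  ¬ ∃ (A A' : Finset V), #A = B ∧ #A' = B ∧ Disjoint A A' ∧ ∀ a ∈ A, ∀ b ∈ A', G.Adj a b

variable {G} {B : ℕ}

theorem BicliqueFree.card_filter_forall_adj_lt (hG : G.BicliqueFree B) (S : Finset V)
    {T : Finset V} (hT : #T = B) : #{x ∈ S | ∀ y ∈ T, G.Adj x y} < B := by
  by_contra! h
  obtain ⟨A, hAS, hA⟩ := exists_subset_card_eq h
  refine hG ⟨T, A, hT, hA, Finset.disjoint_left.2 fun y hyT hyA => ?_, fun y hy x hx => ?_⟩
  · exact G.loopless.irrefl y ((mem_filter.1 (hAS hyA)).2 y hyT)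
  · exact ((mem_filter.1 (hAS hx)).2 y hy).symm

theorem BicliqueFree.sum_choose_card_adj_le (hG : G.BicliqueFree B) (S : Finset V) :
    ∑ x ∈ S, (#{y ∈ S | G.Adj x y}).choose B ≤ (B - 1) * (#S).choose B := by
  set r : V → Finset V → Prop := fun x T => ∀ y ∈ T, G.Adj x y
  calc ∑ x ∈ S, (#{y ∈ S | G.Adj x y}).choose B
      = ∑ x ∈ S, #((S.powersetCard B).bipartiteAbove r x) := by
        refine sum_congr rfl fun x _ => ?_
        rw [← card_powersetCard]
        congr 1
        ext T
        simp only [r, mem_bipartiteAbove, mem_powersetCard, subset_iff, mem_filter]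
        exact ⟨fun ⟨h, hT⟩ => ⟨⟨fun y hy => (h hy).1, hT⟩, fun y hy => (h hy).2⟩,
          fun ⟨⟨h, hT⟩, h'⟩ => ⟨fun y hy => ⟨h hy, h' y hy⟩, hT⟩⟩
    _ = ∑ T ∈ S.powersetCard B, #(S.bipartiteBelow r T) :=
        sum_card_bipartiteAbove_eq_sum_card_bipartiteBelow r
    _ ≤ ∑ _T ∈ S.powersetCard B, (B - 1) := sum_le_sum fun T hT =>
        Order.le_sub_one_of_lt (hG.card_filter_forall_adj_lt S (mem_powersetCard.1 hT).2)
    _ = (B - 1) * (#S).choose B := by rw [sum_const, card_powersetCard, smul_eq_mul, mul_comm]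

theorem BicliqueFree.sum_card_adj_pow_le (hG : G.BicliqueFree B) (hB : 1 ≤ B) (S : Finset V) :
    (∑ x ∈ S, #{y ∈ S | G.Adj x y}) ^ B ≤ B ^ (B + 1) * #S ^ (2 * B - 1) := by
  obtain ⟨k, rfl⟩ : ∃ k, B = k + 1 := ⟨B - 1, by omega⟩
  set deg : V → ℕ := fun x => #{y ∈ S | G.Adj x y}
  have hpow : ∑ x ∈ S, deg x ^ (k + 1) ≤ (k + 1) ^ (k + 1) * ((k + 1) * #S ^ (k + 1)) :=
    calc ∑ x ∈ S, deg x ^ (k + 1)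
        ≤ ∑ x ∈ S, (k + 1) ^ (k + 1) * ((deg x).descFactorial (k + 1) + 1) :=
          sum_le_sum fun x _ => Nat.pow_le_pow_mul_descFactorial_add_one _ _
      _ = (k + 1) ^ (k + 1) * ((k + 1).factorial * ∑ x ∈ S, (deg x).choose (k + 1) + #S) := by
          simp only [Nat.descFactorial_eq_factorial_mul_choose, ← mul_sum, sum_add_distrib,
            card_eq_sum_ones]
      _ ≤ (k + 1) ^ (k + 1) * ((k + 1).factorial * (k * (#S).choose (k + 1)) + #S) := by
          gcongr
          exact hG.sum_choose_card_adj_le S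
      _ = (k + 1) ^ (k + 1) * (k * (#S).descFactorial (k + 1) + #S) := by
          rw [Nat.descFactorial_eq_factorial_mul_choose]
          ring
      _ ≤ (k + 1) ^ (k + 1) * (k * #S ^ (k + 1) + #S ^ (k + 1)) := by
          gcongr
          · exact Nat.descFactorial_le_pow _ _
          · exact Nat.le_self_pow (Nat.succ_ne_zero k) _
      _ = (k + 1) ^ (k + 1) * ((k + 1) * #S ^ (k + 1)) := by ring
  calc (∑ x ∈ S, deg x) ^ (k + 1) ≤ #S ^ k * ∑ x ∈ S, deg x ^ (k + 1) :=
        pow_sum_le_card_mul_sum_pow (fun _ _ => Nat.zero_le _) k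
    _ ≤ #S ^ k * ((k + 1) ^ (k + 1) * ((k + 1) * #S ^ (k + 1))) := by gcongr
    _ = (k + 1) ^ (k + 1 + 1) * #S ^ (2 * (k + 1) - 1) := by
        rw [show 2 * (k + 1) - 1 = k + (k + 1) by omega]
        ring

end SimpleGraph

section ContractedGraph

variable {V : Type} {G : SimpleGraph V} {M : Finset (Sym2 V)}

theorem subsingleton_filter_mem_of_disjoint
    (hM : ∀ e ∈ M, ∀ f ∈ M, e ≠ f → ∀ x : V, x ∈ e → x ∉ f) (x : V) :
    ({e ∈ M | x ∈ e} : Set (Sym2 V)).Subsingleton :=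
  fun e he f hf => by_contra fun hef => hM e he.1 f hf.1 hef x he.2 hf.2

theorem card_filter_contractedAdj_le [Fintype V] {d : ℕ} (hG : G.IsRegularOfDegree d)
    (hM : ∀ e ∈ M, ∀ f ∈ M, e ≠ f → ∀ x : V, x ∈ e → x ∉ f) (v : Sym2 V) :
    #{e ∈ M | contractedAdj G v e} ≤ 2 * d := by
  induction v using Sym2.ind with | _ a b => ?_
  calc #{e ∈ M | contractedAdj G s(a, b) e}
      ≤ #(G.neighborFinset a ∪ G.neighborFinset b) := by
        refine card_le_card_of_forall_subsingleton (fun e y => y ∈ e) (fun e he => ?_)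
          fun y _ => (subsingleton_filter_mem_of_disjoint hM y).anti
            fun e he => ⟨(mem_filter.1 he.1).1, he.2⟩
        obtain ⟨-, x, hx, y, hy, hxy⟩ := (mem_filter.1 he).2
        refine ⟨y, ?_, hy⟩
        rcases Sym2.mem_iff.1 hx with rfl | rfl <;> simp [hxy]
    _ ≤ G.degree a + G.degree b := card_union_le _ _
    _ = 2 * d := by rw [hG a, hG b, two_mul]

theorem card_filter_contractedAdj_product_le
    (hM : ∀ e ∈ M, ∀ f ∈ M, e ≠ f → ∀ x : V, x ∈ e → x ∉ f) {F : Finset (Sym2 V)} (hF : F ⊆ M) :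
    #{q ∈ F ×ˢ F | contractedAdj G q.1 q.2} ≤
      ∑ x ∈ F.biUnion Sym2.toFinset, #{y ∈ F.biUnion Sym2.toFinset | G.Adj x y} := by
  set S := F.biUnion Sym2.toFinset
  calc #{q ∈ F ×ˢ F | contractedAdj G q.1 q.2} ≤ #{p ∈ S ×ˢ S | G.Adj p.1 p.2} := by
        refine card_le_card_of_forall_subsingleton (fun q p => p.1 ∈ q.1 ∧ p.2 ∈ q.2)
          (fun q hq => ?_) fun p _ q hq q' hq' => ?_
        · obtain ⟨hq, -, x, hx, y, hy, hxy⟩ := mem_filter.1 hq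
          obtain ⟨he, hf⟩ := mem_product.1 hq
          refine ⟨(x, y), mem_filter.2 ⟨mem_product.2 ⟨?_, ?_⟩, hxy⟩, hx, hy⟩
          · exact mem_biUnion.2 ⟨q.1, he, Sym2.mem_toFinset.2 hx⟩
          · exact mem_biUnion.2 ⟨q.2, hf, Sym2.mem_toFinset.2 hy⟩
        · have hq₁ := mem_product.1 (mem_filter.1 hq.1).1
          have hq₁' := mem_product.1 (mem_filter.1 hq'.1).1
          exact Prod.ext
            (subsingleton_filter_mem_of_disjoint hM p.1 ⟨hF hq₁.1, hq.2.1⟩ ⟨hF hq₁'.1, hq'.2.1⟩)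
            (subsingleton_filter_mem_of_disjoint hM p.2 ⟨hF hq₁.2, hq.2.2⟩ ⟨hF hq₁'.2, hq'.2.2⟩)
    _ = ∑ x ∈ S, #{y ∈ S | G.Adj x y} := by
        rw [card_filter, sum_product]
        simp_rw [card_filter]

theorem card_contractedAdj_edges_pow_le [Fintype V] {B d : ℕ} (hG : G.IsRegularOfDegree d)
    (hK : G.BicliqueFree B) (hB : 1 ≤ B)
    (hM : ∀ e ∈ M, ∀ f ∈ M, e ≠ f → ∀ x : V, x ∈ e → x ∉ f) (v : Sym2 V) :
    #{q ∈ {e ∈ M | contractedAdj G v e} ×ˢ {e ∈ M | contractedAdj G v e} |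
        contractedAdj G q.1 q.2} ^ B ≤ (16 * B ^ 2) ^ B * d ^ (2 * B - 1) := by
  set F := {e ∈ M | contractedAdj G v e}
  set S := F.biUnion Sym2.toFinset
  have hS : #S ≤ 4 * d :=
    calc #S ≤ ∑ e ∈ F, #e.toFinset := card_biUnion_le
      _ ≤ ∑ _e ∈ F, 2 := sum_le_sum fun e _ => by
          rw [Sym2.card_toFinset]
          split_ifs <;> omega
      _ = 2 * #F := by rw [sum_const, smul_eq_mul, mul_comm]
      _ ≤ 4 * d := by linarith [card_filter_contractedAdj_le hG hM v]
  calc #{q ∈ F ×ˢ F | contractedAdj G q.1 q.2} ^ B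
      ≤ (∑ x ∈ S, #{y ∈ S | G.Adj x y}) ^ B :=
        Nat.pow_le_pow_left (card_filter_contractedAdj_product_le hM (filter_subset _ _)) B
    _ ≤ B ^ (B + 1) * #S ^ (2 * B - 1) := hK.sum_card_adj_pow_le hB S
    _ ≤ B ^ (2 * B) * (4 ^ (2 * B) * d ^ (2 * B - 1)) := by
        gcongr ?_ * ?_
        · exact Nat.pow_le_pow_right hB (by omega)
        · calc #S ^ (2 * B - 1) ≤ (4 * d) ^ (2 * B - 1) := Nat.pow_le_pow_left hS _
            _ = 4 ^ (2 * B - 1) * d ^ (2 * B - 1) := mul_pow ..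
            _ ≤ 4 ^ (2 * B) * d ^ (2 * B - 1) := by gcongr <;> omega
    _ = (16 * B ^ 2) ^ B * d ^ (2 * B - 1) := by
        rw [mul_pow, ← pow_mul, show 16 ^ B = 4 ^ (2 * B) by rw [pow_mul]; norm_num]
        ring

end ContractedGraph

/-- In a `d`-regular `K_{B,B}`-free graph, for any matching `M` and any `v ∈ M`, the
neighborhood of `v` in the contracted matching graph `G_M` spans at most `C·d^(2-1/B)`
edges (`C` depending only on `B`; pairs of adjacent neighbors are counted ordered, which
only changes the constant). -/
theorem contracted_neighborhood_few_edges (B : ℕ) (hB : 1 ≤ B) :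
    ∃ C : ℝ, 0 < C ∧
      ∀ (V : Type) [Fintype V] (G : SimpleGraph V) (d : ℕ),
        G.IsRegularOfDegree d →
        (¬ ∃ (A A' : Finset V), A.card = B ∧ A'.card = B ∧ Disjoint A A' ∧
            ∀ a ∈ A, ∀ b ∈ A', G.Adj a b) →
        ∀ M : Finset (Sym2 V),
          (↑M : Set (Sym2 V)) ⊆ G.edgeSet →
          (∀ e ∈ M, ∀ f ∈ M, e ≠ f → ∀ x : V, x ∈ e → x ∉ f) →
          ∀ v ∈ M,
            ((((M.filter (fun e => contractedAdj G v e)) ×ˢ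
                (M.filter (fun e => contractedAdj G v e))).filter
                  (fun q => contractedAdj G q.1 q.2)).card : ℝ)
              ≤ C * (d : ℝ) ^ ((2 : ℝ) - 1 / (B : ℝ)) := by
  have hB₀ : (0 : ℝ) < B := by exact_mod_cast hB
  refine ⟨16 * (B : ℝ) ^ 2, by positivity, fun V _ G d hG hK M _ hM v _ => ?_⟩
  refine Real.le_mul_rpow_two_sub_inv_of_pow_le (by positivity) (by positivity) (by positivity) hB ?_
  exact_mod_cast card_contractedAdj_edges_pow_le hG hK hB hM v
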